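/- Let R = ⟨R, +, ·, α, 0, 1⟩ be an orthomodular near semiring. Define x ∨ y = x + y, x' = α(x), and x ∧ y = (x' ∨ y')'. Then ⟨R, ∨, ∧, ', 0, 1⟩ is an orthomodular lattice: it is a bounded lattice with antitone involution ' satisfying x ∨ x' = 1 and x ∧ x' = 0, and the orthomodular law holds: x ≤ y implies y = x ∨ (y ∧ x'). -/

import Mathlib

/-- A near semiring: ⟨R, +, ·, 0, 1⟩ with ⟨R, +, 0⟩ a commutative monoid,
⟨R, ·, 1⟩ a unital groupoid, right distributivity, and 0 annihilating. -/
structure NearSemiring (R : Type*) where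
  add : R → R → R
  mul : R → R → R
  zero : R
  one : R
  add_assoc : ∀ x y z : R, add (add x y) z = add x (add y z)
  add_comm : ∀ x y : R, add x y = add y x
  add_zero : ∀ x : R, add x zero = x
  mul_one : ∀ x : R, mul x one = x
  one_mul : ∀ x : R, mul one x = x
  right_distrib : ∀ x y z : R, mul (add x y) z = add (mul x z) (mul y z)
  mul_zero : ∀ x : R, mul x zero = zero
  zero_mul : ∀ x : R, mul zero x = zero

/-- The induced relation: x ≤ y iff x + y = y. -/
def NearSemiring.le {R : Type*} (S : NearSemiring R) (x y : R) : Prop :=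
  S.add x y = y

/-- An involutive near semiring: an idempotent near semiring with an
antitone involution α (antitone w.r.t. the order x ≤ y iff x + y = y). -/
structure InvNearSemiring (R : Type*) extends NearSemiring R where
  add_idem : ∀ x : R, add x x = x
  alpha : R → R
  alpha_alpha : ∀ x : R, alpha (alpha x) = x
  alpha_antitone : ∀ x y : R, add x y = y → add (alpha y) (alpha x) = alpha x

/-- A Łukasiewicz near semiring: an involutive near semiring satisfying (Ł). -/
structure LukNearSemiring (R : Type*) extends InvNearSemiring R where
  luk : ∀ x y : R,
    mul (alpha (mul x (alpha y))) (alpha y) = mul (alpha (mul y (alpha x))) (alpha x)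

/-- An orthomodular near semiring: a Łukasiewicz near semiring with x = x·(x+y). -/
structure OMNearSemiring (R : Type*) extends LukNearSemiring R where
  om : ∀ x y : R, x = mul x (add x y)

/-- The meet induced on an orthomodular near semiring: x ∧ y = α(α(x) + α(y)). -/
def omInf {R : Type*} (S : OMNearSemiring R) (x y : R) : R :=
  S.alpha (S.add (S.alpha x) (S.alpha y))

/-!
The order axioms come from idempotence, commutativity and associativity of `+`, and `1` is the
top element because `1 = 1·(1 + x) = 1 + x`. Law (Ł) applied to `x ≤ y` makes `α x` commute with
`y`, and applied to `y = 1` gives `x·α x = 0`. If `t` lies below both `x` and `α x`, then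
`x + α x ≤ α t`, so `x·t ≤ α t·t = 0`, and (Ł) for `x` and `α t` turns into `t = x·α x = 0`: this is
`x ∧ x' = 0`, and `x ∨ x' = 1` is its dual. Finally, for `x ≤ y` the meet `y ∧ x'` is the product
`α x·y`, whence `y = (x + α x)·y = x + (y ∧ x')`.
-/

namespace NearSemiring

variable {R : Type*} (S : NearSemiring R)

theorem le_antisymm {x y : R} (hxy : S.le x y) (hyx : S.le y x) : x = y := by
  unfold NearSemiring.le at hxy hyx
  rw [← hyx, S.add_comm, hxy]

theorem le_trans {x y z : R} (hxy : S.le x y) (hyz : S.le y z) : S.le x z := by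
  unfold NearSemiring.le at *
  rw [← hyz, ← S.add_assoc, hxy]

theorem add_le {x y z : R} (hxz : S.le x z) (hyz : S.le y z) : S.le (S.add x y) z := by
  unfold NearSemiring.le at *
  rw [S.add_assoc, hyz, hxz]

theorem zero_le (x : R) : S.le S.zero x := by
  unfold NearSemiring.le
  rw [S.add_comm, S.add_zero]

theorem eq_zero_of_le_zero {x : R} (h : S.le x S.zero) : x = S.zero := by
  rw [← h, S.add_zero]

theorem mul_le_mul_right {x y : R} (h : S.le x y) (z : R) : S.le (S.mul x z) (S.mul y z) := by
  unfold NearSemiring.le at *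
  rw [← S.right_distrib, h]

end NearSemiring

namespace InvNearSemiring

variable {R : Type*} (S : InvNearSemiring R)

theorem le_refl (x : R) : S.le x x := S.add_idem x

theorem le_add_left (x y : R) : S.le x (S.add x y) := by
  unfold NearSemiring.le
  rw [← S.add_assoc, S.add_idem]

theorem le_add_right (x y : R) : S.le y (S.add x y) := by
  rw [S.add_comm]
  exact S.le_add_left y x

theorem alpha_le_alpha {x y : R} (h : S.le x y) : S.le (S.alpha y) (S.alpha x) :=
  S.alpha_antitone x y h

theorem le_alpha_comm {x y : R} : S.le x (S.alpha y) ↔ S.le y (S.alpha x) := by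
  have key : ∀ a b : R, S.le a (S.alpha b) → S.le b (S.alpha a) := fun a b h => by
    simpa only [S.alpha_alpha] using S.alpha_le_alpha h
  exact ⟨key x y, key y x⟩

theorem alpha_le_comm {x y : R} : S.le (S.alpha x) y ↔ S.le (S.alpha y) x := by
  simpa only [S.alpha_alpha] using S.le_alpha_comm (x := S.alpha x) (y := S.alpha y)

end InvNearSemiring

namespace OMNearSemiring

variable {R : Type*} (S : OMNearSemiring R)

theorem le_one (x : R) : S.le x S.one := by
  unfold NearSemiring.le
  rw [S.add_comm]
  simpa only [S.one_mul] using (S.om S.one x).symm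

theorem mul_eq_left_of_le {x y : R} (h : S.le x y) : S.mul x y = x := by
  have hom := S.om x y
  rw [show S.add x y = y from h] at hom
  exact hom.symm

theorem mul_le_right (x y : R) : S.le (S.mul x y) y := by
  simpa only [S.one_mul] using S.mul_le_mul_right (S.le_one x) y

theorem alpha_zero : S.alpha S.zero = S.one :=
  S.le_antisymm (S.le_one _) (S.le_alpha_comm.mp (S.zero_le _))

theorem alpha_one : S.alpha S.one = S.zero := by
  rw [← S.alpha_zero, S.alpha_alpha]

theorem mul_alpha_self (x : R) : S.mul x (S.alpha x) = S.zero := by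
  have hluk := S.luk x S.one
  rw [S.alpha_one, S.mul_zero, S.one_mul, S.alpha_alpha] at hluk
  exact hluk.symm

theorem alpha_mul_self (x : R) : S.mul (S.alpha x) x = S.zero := by
  simpa only [S.alpha_alpha] using S.mul_alpha_self (S.alpha x)

theorem alpha_mul_comm_of_le {x y : R} (h : S.le x y) :
    S.mul (S.alpha x) y = S.mul y (S.alpha x) := by
  have hluk := S.luk x (S.alpha y)
  rwa [S.alpha_alpha, S.mul_eq_left_of_le h, S.mul_eq_left_of_le (S.alpha_le_alpha h),
    S.alpha_alpha] at hluk

theorem eq_zero_of_le_of_le_alpha {t x : R} (htx : S.le t x) (htαx : S.le t (S.alpha x)) :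
    t = S.zero := by
  have hαxt : S.le (S.alpha x) (S.alpha t) := S.alpha_le_alpha htx
  have hxt : S.mul x t = S.zero := by
    refine S.eq_zero_of_le_zero (S.le_trans (S.mul_le_mul_right (S.le_add_left x (S.alpha x)) t) ?_)
    have hsum : S.le (S.add x (S.alpha x)) (S.alpha t) := S.add_le (S.le_alpha_comm.mp htαx) hαxt
    simpa only [S.alpha_mul_self] using S.mul_le_mul_right hsum t
  have hαtαx : S.mul (S.alpha t) (S.alpha x) = S.alpha x := by
    rw [S.alpha_mul_comm_of_le htαx, S.mul_eq_left_of_le hαxt]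
  have hluk := S.luk x (S.alpha t)
  rwa [S.alpha_alpha, hxt, S.alpha_zero, S.one_mul, hαtαx, S.alpha_alpha, S.mul_alpha_self]
    at hluk

theorem omInf_le_left (x y : R) : S.le (omInf S x y) x :=
  S.alpha_le_comm.mp (S.le_add_left _ _)

theorem omInf_le_right (x y : R) : S.le (omInf S x y) y :=
  S.alpha_le_comm.mp (S.le_add_right _ _)

theorem le_omInf {x y z : R} (hzx : S.le z x) (hzy : S.le z y) : S.le z (omInf S x y) :=
  S.le_alpha_comm.mp (S.add_le (S.alpha_le_alpha hzx) (S.alpha_le_alpha hzy))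

theorem omInf_alpha_self (x : R) : omInf S x (S.alpha x) = S.zero :=
  S.eq_zero_of_le_of_le_alpha (S.omInf_le_left _ _) (S.omInf_le_right _ _)

theorem add_alpha_self (x : R) : S.add x (S.alpha x) = S.one := by
  have h := congrArg S.alpha (S.omInf_alpha_self x)
  rwa [omInf, S.alpha_alpha, S.alpha_alpha, S.add_comm, S.alpha_zero] at h

theorem omInf_alpha_eq_alpha_mul {x y : R} (h : S.le x y) :
    omInf S y (S.alpha x) = S.mul (S.alpha x) y := by
  refine S.le_antisymm ?_ (S.le_omInf (S.mul_le_right _ _) ?_)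
  · simpa only [S.mul_eq_left_of_le (S.omInf_le_left _ _)] using
      S.mul_le_mul_right (S.omInf_le_right y (S.alpha x)) y
  · rw [S.alpha_mul_comm_of_le h]
    exact S.mul_le_right _ _

theorem eq_add_omInf_alpha_of_le {x y : R} (h : S.le x y) :
    y = S.add x (omInf S y (S.alpha x)) :=
  calc y = S.mul (S.add x (S.alpha x)) y := by rw [S.add_alpha_self, S.one_mul]
    _ = S.add x (omInf S y (S.alpha x)) := by
      rw [S.right_distrib, S.mul_eq_left_of_le h, S.omInf_alpha_eq_alpha_mul h]

end OMNearSemiring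

/-- Every orthomodular near semiring, with x ∨ y = x + y, x' = α(x) and
x ∧ y = (x' ∨ y')', is an orthomodular lattice. -/
theorem omNearSemiring_to_orthomodularLattice {R : Type*} (S : OMNearSemiring R) :
    -- ≤ (defined by x + y = y) is a partial order
    (∀ x : R, S.le x x) ∧
    (∀ x y : R, S.le x y → S.le y x → x = y) ∧
    (∀ x y z : R, S.le x y → S.le y z → S.le x z) ∧
    -- x ∨ y = x + y is the least upper bound
    (∀ x y : R, S.le x (S.add x y)) ∧
    (∀ x y : R, S.le y (S.add x y)) ∧
    (∀ x y z : R, S.le x z → S.le y z → S.le (S.add x y) z) ∧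
    -- x ∧ y = (x' ∨ y')' is the greatest lower bound
    (∀ x y : R, S.le (omInf S x y) x) ∧
    (∀ x y : R, S.le (omInf S x y) y) ∧
    (∀ x y z : R, S.le z x → S.le z y → S.le z (omInf S x y)) ∧
    -- the lattice is bounded by 0 and 1
    (∀ x : R, S.le S.zero x) ∧
    (∀ x : R, S.le x S.one) ∧
    -- ' = α is an antitone involution
    (∀ x : R, S.alpha (S.alpha x) = x) ∧
    (∀ x y : R, S.le x y → S.le (S.alpha y) (S.alpha x)) ∧
    -- complementation laws
    (∀ x : R, S.add x (S.alpha x) = S.one) ∧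
    (∀ x : R, omInf S x (S.alpha x) = S.zero) ∧
    -- the orthomodular law: x ≤ y implies y = x ∨ (y ∧ x')
    (∀ x y : R, S.le x y → y = S.add x (omInf S y (S.alpha x))) :=
  ⟨S.le_refl, fun _ _ => S.le_antisymm, fun _ _ _ => S.le_trans, S.le_add_left,
    S.le_add_right, fun _ _ _ => S.add_le, S.omInf_le_left, S.omInf_le_right,
    fun _ _ _ => S.le_omInf, S.zero_le, S.le_one, S.alpha_alpha, fun _ _ => S.alpha_le_alpha,
    S.add_alpha_self, S.omInf_alpha_self, fun _ _ => S.eq_add_omInf_alpha_of_le⟩
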